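/- arXiv:0707.3986 — 8 statements merged into one kernel-verified Lean document; each statement's English description precedes it below -/
import Mathlib

section
/- Let f : D → G be any function with f(r) = 0. Then there exists a family of functions (f_A)_{A ⊆ S}, f_A : D → G, such that: (i) each f_A depends only on the coordinates in A, i.e. f_A(x) = f_A(g_A(x)) for all x ∈ D; (ii) f_A(x) = 0 whenever x_i = r_i for some i ∈ A; and (iii) f(x) = Σ_{A ⊆ S} f_A(x) for every x ∈ D. -/
/-!
Take `f_A x = ∑_{B ⊆ A} (-1)^|A \ B| f (g_B x)`, the Möbius transform of `B ↦ f (g_B x)` on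
the Boolean lattice, where `g_B x = B.piecewise x r`. It only sees `g_B x` with `B ⊆ A`, which
depends only on the coordinates in `A`; if `x_i = r_i` for some `i ∈ A` then
`g_B x = g_{B ∪ {i}} x` and the terms cancel in pairs; and Möbius inversion gives
`∑_A f_A x = f (g_S x) = f x`.
-/

open Finset

section Moebius

variable {ι G : Type*} [DecidableEq ι] [AddCommGroup G]

def moebiusTransform (h : Finset ι → G) (A : Finset ι) : G :=
  ∑ B ∈ A.powerset, (-1 : ℤ) ^ #(A \ B) • h B

theorem moebiusTransform_congr {h h' : Finset ι → G} {A : Finset ι}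
    (hh : ∀ B ⊆ A, h B = h' B) : moebiusTransform h A = moebiusTransform h' A :=
  sum_congr rfl fun B hB => by rw [hh B (mem_powerset.mp hB)]

theorem moebiusTransform_insert (h : Finset ι → G) {a : ι} {A : Finset ι} (ha : a ∉ A) :
    moebiusTransform h (insert a A) =
      moebiusTransform (fun B => h (insert a B)) A - moebiusTransform h A := by
  rw [moebiusTransform, sum_powerset_insert ha, moebiusTransform, moebiusTransform,
    sub_eq_neg_add, ← sum_neg_distrib, ← sum_add_distrib, ← sum_add_distrib]
  refine sum_congr rfl fun B hB => ?_
  have haB : a ∉ B := fun haB => ha (mem_powerset.mp hB haB)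
  have hleft : insert a A \ B = insert a (A \ B) := by
    rw [insert_sdiff_of_notMem _ haB]
  have hright : insert a A \ insert a B = A \ B := by
    rw [insert_sdiff_insert, sdiff_insert_of_notMem ha]
  rw [hleft, hright, card_insert_of_notMem (fun haAB => ha (mem_sdiff.mp haAB).1), pow_succ]
  simp only [mul_neg_one, neg_smul]

theorem moebiusTransform_eq_zero_of_insert_eq {h : Finset ι → G} {a : ι}
    (hh : ∀ B, h (insert a B) = h B) {A : Finset ι} (ha : a ∈ A) :
    moebiusTransform h A = 0 := by
  rw [← insert_erase ha, moebiusTransform_insert h (notMem_erase a A)]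
  simp only [hh, sub_self]

theorem sum_powerset_moebiusTransform (h : Finset ι → G) (s : Finset ι) :
    ∑ A ∈ s.powerset, moebiusTransform h A = h s := by
  induction s using Finset.induction_on generalizing h with
  | empty => simp [moebiusTransform]
  | insert a s ha ih =>
    rw [sum_powerset_insert ha, sum_congr rfl fun A hA =>
      moebiusTransform_insert h fun haA => ha (mem_powerset.mp hA haA), sum_sub_distrib, ih, ih]
    abel

end Moebius

theorem Finset.piecewise_insert_of_eq {ι : Type*} {π : ι → Type*} [DecidableEq ι]
    {f g : ∀ i, π i} {a : ι} (hfg : f a = g a) (s : Finset ι) :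
    (insert a s).piecewise f g = s.piecewise f g := by
  rw [piecewise_insert]
  exact Function.update_eq_self_iff.mpr (by
    by_cases has : a ∈ s
    · rw [piecewise_eq_of_mem _ _ _ has]
    · rw [piecewise_eq_of_notMem _ _ _ has, hfg])

theorem besag_decomposition_exists_general
    {N : ℕ} (D : Fin N → Type*)
    {G : Type*} [AddCommGroup G] (r : ∀ i, D i)
    (f : (∀ i, D i) → G) :
    ∃ F : Finset (Fin N) → ((∀ i, D i) → G),
      (∀ (A : Finset (Fin N)) (x : ∀ i, D i),
          F A x = F A (fun i => if i ∈ A then x i else r i)) ∧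
      (∀ (A : Finset (Fin N)) (x : ∀ i, D i),
          (∃ i ∈ A, x i = r i) → F A x = 0) ∧
      (∀ x : ∀ i, D i, f x = ∑ A : Finset (Fin N), F A x) := by
  refine ⟨fun A x => moebiusTransform (fun B => f (B.piecewise x r)) A, ?_, ?_, ?_⟩
  · intro A x
    exact moebiusTransform_congr fun B hB =>
      congrArg f (piecewise_piecewise_of_subset_left hB x r r).symm
  · rintro A x ⟨i, hiA, hxi⟩
    exact moebiusTransform_eq_zero_of_insert_eq (fun B => by rw [piecewise_insert_of_eq hxi]) hiA
  · intro x
    rw [← powerset_univ, sum_powerset_moebiusTransform, piecewise_univ]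

/-- **Existence of the Hammersley–Clifford / Besag decomposition.**
Let `N` be a positive integer, `S = {1,…,N}`, `(D i)` a family of nonempty sets,
`D = ∏ i, D i`, `G` an additive commutative group, and `r ∈ D` a reference point.
For `A ⊆ S` the grounding map sends `x` to the configuration equal to `x` on `A`
and to `r` off `A`.  If `f : D → G` satisfies `f r = 0`, then there is a family
`(f_A)_{A ⊆ S}` such that each `f_A` depends only on the coordinates in `A`,
`f_A` vanishes as soon as some coordinate indexed by `A` is grounded, and
`f = Σ_{A ⊆ S} f_A`. -/
theorem besag_decomposition_exists
    {N : ℕ} (hN : 0 < N) (D : Fin N → Type*) [∀ i, Nonempty (D i)]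
    {G : Type*} [AddCommGroup G] (r : ∀ i, D i)
    (f : (∀ i, D i) → G) (hf : f r = 0) :
    ∃ F : Finset (Fin N) → ((∀ i, D i) → G),
      (∀ (A : Finset (Fin N)) (x : ∀ i, D i),
          F A x = F A (fun i => if i ∈ A then x i else r i)) ∧
      (∀ (A : Finset (Fin N)) (x : ∀ i, D i),
          (∃ i ∈ A, x i = r i) → F A x = 0) ∧
      (∀ x : ∀ i, D i, f x = ∑ A : Finset (Fin N), F A x) :=
  besag_decomposition_exists_general D r f
end

section
/- Let f : D → G with f(r) = 0, and let (f_A)_{A ⊆ S} and (f'_A)_{A ⊆ S} be two families of functions D → G such that each f_A and each f'_A depends only on the coordinates in A, vanishes whenever some coordinate x_i with i ∈ A equals r_i, and f(x) = Σ_{A ⊆ S} f_A(x) = Σ_{A ⊆ S} f'_A(x) for all x ∈ D. Then f_A = f'_A for every A ⊆ S. -/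
/-!
Summing such a family over the subsets of `A` and evaluating at `x` gives `f` at `x` grounded
outside `A`: the terms with `B ⊄ A` vanish because some coordinate of `B` is grounded. So both
families have the same partial sums over every powerset, and these determine a set function
by strong induction on `A`, peeling off the top term `A` itself.
-/

namespace Finset

theorem eq_of_sum_powerset_eq {ι M : Type*} [AddCancelCommMonoid M] {φ ψ : Finset ι → M}
    (h : ∀ A : Finset ι, ∑ B ∈ A.powerset, φ B = ∑ B ∈ A.powerset, ψ B) : φ = ψ := by
  classical
  funext A
  induction A using strongInduction with
  | _ A ih =>
    have hproper : ∑ B ∈ A.powerset.erase A, φ B = ∑ B ∈ A.powerset.erase A, ψ B := by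
      refine sum_congr rfl fun B hB => ih B ?_
      obtain ⟨hne, hsub⟩ := mem_erase.mp hB
      exact ssubset_iff_subset_ne.mpr ⟨mem_powerset.mp hsub, hne⟩
    have hA := h A
    rw [← add_sum_erase _ _ (mem_powerset_self A),
      ← add_sum_erase _ _ (mem_powerset_self A), hproper] at hA
    exact add_right_cancel hA

end Finset

section Grounding

variable {ι : Type*} [DecidableEq ι] {D : ι → Type*}

def ground (r : ∀ i, D i) (A : Finset ι) (x : ∀ i, D i) : ∀ i, D i :=
  fun i => if i ∈ A then x i else r i

theorem ground_ground_of_subset (r : ∀ i, D i) {A B : Finset ι} (hBA : B ⊆ A) (x : ∀ i, D i) :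
    ground r B (ground r A x) = ground r B x := by
  funext i
  by_cases hi : i ∈ B
  · simp [ground, hi, hBA hi]
  · simp [ground, hi]

variable [Fintype ι] {G : Type*} [AddCommGroup G]

theorem sum_univ_ground_eq_sum_powerset (r : ∀ i, D i) (F : Finset ι → (∀ i, D i) → G)
    (hF1 : ∀ A x, F A x = F A (ground r A x))
    (hF2 : ∀ A x, (∃ i ∈ A, x i = r i) → F A x = 0) (A : Finset ι) (x : ∀ i, D i) :
    ∑ B, F B (ground r A x) = ∑ B ∈ A.powerset, F B x :=
  calc ∑ B, F B (ground r A x) = ∑ B ∈ A.powerset, F B (ground r A x) := by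
        refine (Finset.sum_subset (Finset.subset_univ _) fun B _ hB => ?_).symm
        obtain ⟨i, hiB, hiA⟩ := Finset.not_subset.mp (mt Finset.mem_powerset.mpr hB)
        exact hF2 B _ ⟨i, hiB, if_neg hiA⟩
    _ = ∑ B ∈ A.powerset, F B x := Finset.sum_congr rfl fun B hB => by
        rw [hF1 B x, hF1, ground_ground_of_subset r (Finset.mem_powerset.mp hB)]

end Grounding

theorem besag_decomposition_unique_general
    {N : ℕ} (D : Fin N → Type*)
    {G : Type*} [AddCommGroup G] (r : ∀ i, D i)
    (f : (∀ i, D i) → G)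
    (F F' : Finset (Fin N) → ((∀ i, D i) → G))
    (hF1 : ∀ (A : Finset (Fin N)) (x : ∀ i, D i),
        F A x = F A (fun i => if i ∈ A then x i else r i))
    (hF2 : ∀ (A : Finset (Fin N)) (x : ∀ i, D i),
        (∃ i ∈ A, x i = r i) → F A x = 0)
    (hF3 : ∀ x : ∀ i, D i, f x = ∑ A : Finset (Fin N), F A x)
    (hF'1 : ∀ (A : Finset (Fin N)) (x : ∀ i, D i),
        F' A x = F' A (fun i => if i ∈ A then x i else r i))
    (hF'2 : ∀ (A : Finset (Fin N)) (x : ∀ i, D i),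
        (∃ i ∈ A, x i = r i) → F' A x = 0)
    (hF'3 : ∀ x : ∀ i, D i, f x = ∑ A : Finset (Fin N), F' A x) :
    ∀ A : Finset (Fin N), F A = F' A := by
  refine congrFun (Finset.eq_of_sum_powerset_eq fun A => funext fun x => ?_)
  rw [Finset.sum_apply, Finset.sum_apply,
    ← sum_univ_ground_eq_sum_powerset r F hF1 hF2, ← hF3,
    ← sum_univ_ground_eq_sum_powerset r F' hF'1 hF'2, ← hF'3]

/-- **Uniqueness of the Hammersley–Clifford / Besag decomposition.**
Given `f : D → G` with `f r = 0`, and two families `(F A)` and `(F' A)` of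
functions `D → G`, each depending only on the coordinates in `A`, vanishing
whenever some coordinate indexed by `A` is grounded, and both summing to `f`,
the two families coincide. -/
theorem besag_decomposition_unique
    {N : ℕ} (hN : 0 < N) (D : Fin N → Type*) [∀ i, Nonempty (D i)]
    {G : Type*} [AddCommGroup G] (r : ∀ i, D i)
    (f : (∀ i, D i) → G) (hf : f r = 0)
    (F F' : Finset (Fin N) → ((∀ i, D i) → G))
    (hF1 : ∀ (A : Finset (Fin N)) (x : ∀ i, D i),
        F A x = F A (fun i => if i ∈ A then x i else r i))
    (hF2 : ∀ (A : Finset (Fin N)) (x : ∀ i, D i),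
        (∃ i ∈ A, x i = r i) → F A x = 0)
    (hF3 : ∀ x : ∀ i, D i, f x = ∑ A : Finset (Fin N), F A x)
    (hF'1 : ∀ (A : Finset (Fin N)) (x : ∀ i, D i),
        F' A x = F' A (fun i => if i ∈ A then x i else r i))
    (hF'2 : ∀ (A : Finset (Fin N)) (x : ∀ i, D i),
        (∃ i ∈ A, x i = r i) → F' A x = 0)
    (hF'3 : ∀ x : ∀ i, D i, f x = ∑ A : Finset (Fin N), F' A x) :
    ∀ A : Finset (Fin N), F A = F' A :=
  besag_decomposition_unique_general D r f F F' hF1 hF2 hF3 hF'1 hF'2 hF'3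
end

section
/- Let p : D → ℝ satisfy p(x) > 0 for all x ∈ D, and let (Q_A)_{A ⊆ S} be the unique family of functions such that each Q_A depends only on the coordinates in A, vanishes whenever some coordinate x_i with i ∈ A equals r_i, and log(p(x)/p(r)) = Σ_{A ⊆ S} Q_A(x) for all x. Then for every site i ∈ S and every x ∈ D, log( p(x) / p(g_{S∖{i}}(x)) ) = Σ_{A ⊆ S, i ∈ A} Q_A(x), where g_{S∖{i}}(x) is the configuration obtained from x by replacing its i-th coordinate by r_i. -/
open Function

section DependsOn

variable {ι : Type*} {α : ι → Type*} {β : Type*}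

theorem dependsOn_of_eq_comp_ground [DecidableEq ι] {f : (∀ i, α i) → β} {A : Finset ι}
    (r : ∀ i, α i) (hf : ∀ x, f x = f (fun i => if i ∈ A then x i else r i)) :
    DependsOn f A := by
  intro x y hxy
  rw [hf x, hf y]
  congr 1
  funext i
  split_ifs with hi
  · exact hxy i hi
  · rfl

theorem DependsOn.apply_update_of_notMem [DecidableEq ι] {f : (∀ i, α i) → β} {s : Set ι}
    (hf : DependsOn f s) {i : ι} (hi : i ∉ s) (x : ∀ i, α i) (v : α i) :
    f (Function.update x i v) = f x :=
  hf fun _ hj => update_of_ne (ne_of_mem_of_not_mem hj hi) v x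

end DependsOn

theorem Real.log_div_eq_sub_log_div {a b c : ℝ} (ha : 0 < a) (hb : 0 < b) (hc : 0 < c) :
    Real.log (a / b) = Real.log (a / c) - Real.log (b / c) := by
  rw [← Real.log_div (div_pos ha hc).ne' (div_pos hb hc).ne', div_div_div_cancel_right₀ hc.ne']

theorem potential_update_ground {ι : Type*} [DecidableEq ι] {α : ι → Type*} {β : Type*} [Zero β]
    (r : ∀ i, α i) {Q : Finset ι → (∀ i, α i) → β}
    (hQ1 : ∀ A x, Q A x = Q A (fun i => if i ∈ A then x i else r i))
    (hQ2 : ∀ A x, (∃ i ∈ A, x i = r i) → Q A x = 0) (A : Finset ι) (i : ι) (x : ∀ i, α i) :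
    Q A (update x i (r i)) = if i ∈ A then 0 else Q A x := by
  split_ifs with hi
  · exact hQ2 A _ ⟨i, hi, update_self i (r i) x⟩
  · exact (dependsOn_of_eq_comp_ground r (hQ1 A)).apply_update_of_notMem
      (Finset.mem_coe.not.mpr hi) x (r i)

theorem hammersley_clifford_conditional_general
    {N : ℕ} (D : Fin N → Type*)
    (r : ∀ i, D i) (p : (∀ i, D i) → ℝ) (hp : ∀ x, 0 < p x)
    (Q : Finset (Fin N) → ((∀ i, D i) → ℝ))
    (hQ1 : ∀ (A : Finset (Fin N)) (x : ∀ i, D i),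
        Q A x = Q A (fun i => if i ∈ A then x i else r i))
    (hQ2 : ∀ (A : Finset (Fin N)) (x : ∀ i, D i),
        (∃ i ∈ A, x i = r i) → Q A x = 0)
    (hQ3 : ∀ x : ∀ i, D i,
        Real.log (p x / p r) = ∑ A : Finset (Fin N), Q A x) :
    ∀ (i : Fin N) (x : ∀ j, D j),
      Real.log (p x / p (Function.update x i (r i))) =
        ∑ A ∈ Finset.univ.filter (fun A : Finset (Fin N) => i ∈ A), Q A x := by
  intro i x
  rw [Real.log_div_eq_sub_log_div (hp _) (hp _) (hp r), hQ3, hQ3]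
  simp_rw [potential_update_ground r hQ1 hQ2 _ i x]
  rw [Finset.sum_ite, Finset.sum_const_zero, zero_add,
    ← Finset.sum_filter_add_sum_filter_not Finset.univ (fun A => i ∈ A)]
  ring

/-- **Hammersley–Clifford theorem: conditional log-ratio at a site.**
If `(Q A)` is the family of potentials of a strictly positive `p : D → ℝ`
(each `Q A` depending only on the coordinates in `A`, vanishing when a
coordinate indexed by `A` is grounded, and summing to `log (p x / p r)`),
then for every site `i` and configuration `x`,
`log (p x / p (g_{S∖{i}} x)) = Σ_{A ∋ i} Q A x`,
where `g_{S∖{i}} x` replaces the `i`-th coordinate of `x` by `r i`. -/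
theorem hammersley_clifford_conditional
    {N : ℕ} (hN : 0 < N) (D : Fin N → Type*) [∀ i, Nonempty (D i)]
    (r : ∀ i, D i) (p : (∀ i, D i) → ℝ) (hp : ∀ x, 0 < p x)
    (Q : Finset (Fin N) → ((∀ i, D i) → ℝ))
    (hQ1 : ∀ (A : Finset (Fin N)) (x : ∀ i, D i),
        Q A x = Q A (fun i => if i ∈ A then x i else r i))
    (hQ2 : ∀ (A : Finset (Fin N)) (x : ∀ i, D i),
        (∃ i ∈ A, x i = r i) → Q A x = 0)
    (hQ3 : ∀ x : ∀ i, D i,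
        Real.log (p x / p r) = ∑ A : Finset (Fin N), Q A x) :
    ∀ (i : Fin N) (x : ∀ j, D j),
      Real.log (p x / p (Function.update x i (r i))) =
        ∑ A ∈ Finset.univ.filter (fun A : Finset (Fin N) => i ∈ A), Q A x :=
  hammersley_clifford_conditional_general D r p hp Q hQ1 hQ2 hQ3
end

section
/- The mixed-states induced measure μ has Radon–Nikodym density with respect to m given by the mixed-states probability density p^m(x) = ρ · Σ_l π_l · 1_{{ξ_l}}(x) + (1−ρ) · (1 − 1_A(x)) · p(x), where A = {ξ_l : l ∈ ℕ}; that is, μ = m.withDensity p^m, i.e. μ(B) = ∫_B p^m dm for every Borel set B ⊆ ℝ. -/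
open MeasureTheory
open scoped ENNReal NNReal

/-!
Both measures split into an atomic part carried by `Set.range ξ` and a diffuse part. At the atom
`ξ l` the density `pm` takes the value `ρ * π l`, which matches the weights of the Dirac masses;
off the countable, hence Lebesgue-null, set `Set.range ξ` it equals `(1 - ρ) * p`, so the
Lebesgue part of `m` reproduces `(1 - ρ) • volume.withDensity p`.
-/

namespace MeasureTheory.Measure

variable {α ι : Type*} [MeasurableSpace α]

theorem withDensity_sum_dirac [MeasurableSingletonClass α] (x : ι → α) (f : α → ℝ≥0∞) :
    (sum fun i => dirac (x i)).withDensity f = sum fun i => f (x i) • dirac (x i) := by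
  simp only [withDensity_sum, dirac_withDensity]

theorem withDensity_congr_compl_countable (μ : Measure α) [NullSingletonClass μ]
    {s : Set α} (hs : s.Countable) {f g : α → ℝ≥0∞} (hfg : Set.EqOn f g sᶜ) :
    μ.withDensity f = μ.withDensity g :=
  withDensity_congr_ae <| (hs.ae_notMem μ).mono fun _ hx => hfg hx

theorem smul_sum_smul (c : ℝ≥0) (w : ι → ℝ≥0) (μ : ι → Measure α) :
    c • sum (fun i => w i • μ i) = sum fun i => ((c : ℝ≥0∞) * w i) • μ i := by
  ext s hs
  simp only [smul_apply, sum_apply _ hs, ENNReal.smul_def, smul_eq_mul, ← ENNReal.tsum_mul_left,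
    mul_assoc]

end MeasureTheory.Measure

section IndicatorSum

variable {ι α : Type*} {ξ : ι → α} (c : ι → ℝ≥0∞)

theorem tsum_mul_indicator_singleton_apply_self (hξ : Function.Injective ξ) (k : ι) :
    ∑' l, c l * Set.indicator {ξ l} (fun _ => 1) (ξ k) = c k := by
  rw [tsum_eq_single k fun l hl => by simp [Set.indicator_of_notMem, hξ.ne hl.symm]]
  simp

theorem tsum_mul_indicator_singleton_apply_of_notMem_range {x : α} (hx : x ∉ Set.range ξ) :
    ∑' l, c l * Set.indicator {ξ l} (fun _ => 1) x = 0 :=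
  ENNReal.tsum_eq_zero.mpr fun l => by
    rw [Set.indicator_of_notMem (s := {ξ l}) fun h => hx ⟨l, h.symm⟩, mul_zero]

end IndicatorSum

theorem mixedStates_radonNikodym_general
    (ξ : ℕ → ℝ) (hξ : Function.Injective ξ)
    (π : ℕ → ℝ≥0)
    (ρ : ℝ≥0)
    (p : ℝ → ℝ≥0) (hp : Measurable p)
    (μ m : Measure ℝ)
    (hμ : μ = ρ • Measure.sum (fun l : ℕ => π l • Measure.dirac (ξ l)) +
        (1 - ρ) • volume.withDensity (fun x => (p x : ℝ≥0∞)))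
    (hm : m = Measure.sum (fun l : ℕ => Measure.dirac (ξ l)) + volume)
    (pm : ℝ → ℝ≥0∞)
    (hpm : ∀ x, pm x =
        (ρ : ℝ≥0∞) * ∑' l, (π l : ℝ≥0∞) * Set.indicator {ξ l} (fun _ => 1) x +
        (1 - (ρ : ℝ≥0∞)) * (1 - Set.indicator (Set.range ξ) (fun _ => 1) x) *
          (p x : ℝ≥0∞)) :
    μ = m.withDensity pm := by
  have hpm_atom (l : ℕ) : pm (ξ l) = (ρ : ℝ≥0∞) * π l := by
    rw [hpm, tsum_mul_indicator_singleton_apply_self _ hξ,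
      Set.indicator_of_mem (Set.mem_range_self l)]
    simp
  have hpm_off : Set.EqOn pm ((1 - (ρ : ℝ≥0∞)) • fun x => (p x : ℝ≥0∞)) (Set.range ξ)ᶜ :=
    fun x hx => by
      rw [hpm, tsum_mul_indicator_singleton_apply_of_notMem_range _ hx,
        Set.indicator_of_notMem hx]
      simp
  rw [hμ, hm, withDensity_add_measure, Measure.withDensity_sum_dirac,
    Measure.withDensity_congr_compl_countable volume (Set.countable_range ξ) hpm_off,
    withDensity_smul _ hp.coe_nnreal_ennreal, Measure.smul_sum_smul]
  simp only [hpm_atom, ENNReal.smul_def, ENNReal.coe_sub, ENNReal.coe_one]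

/-- **Radon–Nikodym density of the mixed-states induced measure.**
With `ξ`, `π`, `ρ`, `p` as in the mixed-states setting, `A = {ξ_l : l ∈ ℕ}`,
the mixed-states induced measure
`μ = ρ • (Σ_l π_l • δ_{ξ_l}) + (1−ρ) • λ.withDensity p`
has density w.r.t. the reference measure `m = (Σ_l δ_{ξ_l}) + λ` given by
`p^m x = ρ · Σ_l π_l · 1_{{ξ_l}}(x) + (1−ρ) · (1 − 1_A(x)) · p x`,
i.e. `μ = m.withDensity p^m` (equivalently `μ B = ∫_B p^m dm` for all Borel `B`). -/
theorem mixedStates_radonNikodym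
    (ξ : ℕ → ℝ) (hξ : Function.Injective ξ)
    (π : ℕ → ℝ≥0) (hπ : ∑' l, π l = 1)
    (ρ : ℝ≥0) (hρ : ρ ≤ 1)
    (p : ℝ → ℝ≥0) (hp : Measurable p) (hp1 : ∫⁻ x, (p x : ℝ≥0∞) = 1)
    (μ m : Measure ℝ)
    (hμ : μ = ρ • Measure.sum (fun l : ℕ => π l • Measure.dirac (ξ l)) +
        (1 - ρ) • volume.withDensity (fun x => (p x : ℝ≥0∞)))
    (hm : m = Measure.sum (fun l : ℕ => Measure.dirac (ξ l)) + volume)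
    (pm : ℝ → ℝ≥0∞)
    (hpm : ∀ x, pm x =
        (ρ : ℝ≥0∞) * ∑' l, (π l : ℝ≥0∞) * Set.indicator {ξ l} (fun _ => 1) x +
        (1 - (ρ : ℝ≥0∞)) * (1 - Set.indicator (Set.range ξ) (fun _ => 1) x) *
          (p x : ℝ≥0∞)) :
    μ = m.withDensity pm :=
  mixedStates_radonNikodym_general ξ hξ π ρ p hp μ m hμ hm pm hpm
end

section
/- Let D_i, D_j, D_k be sets with distinguished elements r_i, r_j, r_k, each set containing an element distinct from its distinguished element. Let G_i : D_j × D_k → ℝ, G_j : D_i × D_k → ℝ, G_k : D_i × D_j → ℝ satisfy 1*_{r_i}(x_i) · G_i(x_j, x_k) = 1*_{r_j}(x_j) · G_j(x_i, x_k) = 1*_{r_k}(x_k) · G_k(x_i, x_j) for all x_i ∈ D_i, x_j ∈ D_j, x_k ∈ D_k. Then there exists a single constant χ ∈ ℝ such that G_i(x_j, x_k) = χ · 1*_{r_j}(x_j) · 1*_{r_k}(x_k), G_j(x_i, x_k) = χ · 1*_{r_i}(x_i) · 1*_{r_k}(x_k), and G_k(x_i, x_j) = χ · 1*_{r_i}(x_i)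 · 1*_{r_j}(x_j), for all arguments. -/
/-! Each of the two defining identities is, for a fixed third argument, a second-order identity
`1*_r(x) · F(y) = 1*_s(y) · H(x)`, which forces `F = c · 1*_s` and `H = c · 1*_r` (evaluate at
`x ≠ r` and `y ≠ s`). Applying this to both identities yields factors `c(x_k)` and `d(x_i)`;
comparing the two expressions for `G_j` gives a third second-order identity between `c` and `d`,
whose constant is `χ`. -/

open scoped Classical in
/-- The grounded indicator `1*_r : D → ℝ`: `0` at the reference value `r`
and `1` elsewhere. -/
noncomputable def groundedIndicator {D : Type*} (r x : D) : ℝ :=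
  if x = r then 0 else 1

theorem groundedIndicator_of_ne {D : Type*} {r x : D} (h : x ≠ r) :
    groundedIndicator r x = 1 := by
  simp [groundedIndicator, h]

theorem secondOrder_clique_factorization {Di Dj : Type*} (ri : Di) (rj : Dj)
    (hDi : ∃ xi : Di, xi ≠ ri) (hDj : ∃ xj : Dj, xj ≠ rj) (Gi : Dj → ℝ) (Gj : Di → ℝ)
    (h : ∀ xi xj, groundedIndicator ri xi * Gi xj = groundedIndicator rj xj * Gj xi) :
    ∃ χ : ℝ, (∀ xj, Gi xj = χ * groundedIndicator rj xj) ∧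
      ∀ xi, Gj xi = χ * groundedIndicator ri xi := by
  obtain ⟨ai, hai⟩ := hDi
  obtain ⟨aj, haj⟩ := hDj
  have hGi (xj : Dj) : Gi xj = Gj ai * groundedIndicator rj xj := by
    simpa [groundedIndicator_of_ne hai, mul_comm] using h ai xj
  have hGj (xi : Di) : Gj xi = Gi aj * groundedIndicator ri xi := by
    simpa [groundedIndicator_of_ne haj, mul_comm] using (h xi aj).symm
  have hχ : Gi aj = Gj ai := by
    simpa [groundedIndicator_of_ne hai, groundedIndicator_of_ne haj] using h ai aj
  exact ⟨Gi aj, fun xj => by rw [hGi, hχ], fun xi => hGj xi⟩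

/-- **Third-order clique factorization.**
If `1*_{r_i}(x_i) · G_i(x_j,x_k) = 1*_{r_j}(x_j) · G_j(x_i,x_k)
 = 1*_{r_k}(x_k) · G_k(x_i,x_j)` for all arguments, and each set contains an
element distinct from its distinguished element, then there is a single
constant `χ` such that each `G` is `χ` times the product of the grounded
indicators of its two arguments. -/
theorem thirdOrder_clique_factorization
    {Di Dj Dk : Type*} (ri : Di) (rj : Dj) (rk : Dk)
    (hDi : ∃ xi : Di, xi ≠ ri) (hDj : ∃ xj : Dj, xj ≠ rj)
    (hDk : ∃ xk : Dk, xk ≠ rk)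
    (Gi : Dj → Dk → ℝ) (Gj : Di → Dk → ℝ) (Gk : Di → Dj → ℝ)
    (h1 : ∀ (xi : Di) (xj : Dj) (xk : Dk),
        groundedIndicator ri xi * Gi xj xk =
          groundedIndicator rj xj * Gj xi xk)
    (h2 : ∀ (xi : Di) (xj : Dj) (xk : Dk),
        groundedIndicator rj xj * Gj xi xk =
          groundedIndicator rk xk * Gk xi xj) :
    ∃ χ : ℝ,
      (∀ (xj : Dj) (xk : Dk),
        Gi xj xk = χ * (groundedIndicator rj xj * groundedIndicator rk xk)) ∧
      (∀ (xi : Di) (xk : Dk),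
        Gj xi xk = χ * (groundedIndicator ri xi * groundedIndicator rk xk)) ∧
      (∀ (xi : Di) (xj : Dj),
        Gk xi xj = χ * (groundedIndicator ri xi * groundedIndicator rj xj)) := by
  choose c hGi hGj using fun xk =>
    secondOrder_clique_factorization ri rj hDi hDj (Gi · xk) (Gj · xk) (h1 · · xk)
  choose d hGj' hGk using fun xi =>
    secondOrder_clique_factorization rj rk hDj hDk (Gj xi) (Gk xi) (h2 xi)
  obtain ⟨χ, hc, hd⟩ := secondOrder_clique_factorization ri rk hDi hDk c d
    fun xi xk => by rw [mul_comm, ← hGj, hGj', mul_comm]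
  refine ⟨χ, fun xj xk => ?_, fun xi xk => ?_, fun xi xj => ?_⟩
  · rw [hGi, hc]; ring
  · rw [hGj, hc]; ring
  · rw [hGk, hd]; ring
end

section
/- Let p, q : D → ℝ be strictly positive functions. Assume that for each i ∈ S there is a function g_i : D → ℝ that depends only on the coordinates in S∖{i} (i.e. g_i(x) = g_i(y) whenever x and y agree on all coordinates except possibly the i-th), such that for every x ∈ D: log( p(x) / p(g_{S∖{i}}(x)) ) = 1*_{r_i}(x_i) · g_i(x) + log( q(x) / q(g_{S∖{i}}(x)) ). Assume also that each D_i contains an element distinct from r_i. Then there exists a family of real constants (c_A) indexed by the nonempty subsets A ⊆ S such that for every x ∈ D: log( p(x)/p(r) ) = Σ_{∅ ≠ A ⊆ S} c_A · ∏_{i∈A} 1*_{r_i}(x_i) + log( q(x)/q(r) ). -/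
section MobiusInverse

variable {α M : Type*} [DecidableEq α] [AddCommGroup M]

noncomputable def mobiusInverse (φ : Finset α → M) (A : Finset α) : M :=
  φ A - ∑ B ∈ (A.powerset.erase A).attach, mobiusInverse φ B.1
termination_by A.card
decreasing_by
  exact Finset.card_lt_card <| Finset.ssubset_iff_subset_ne.mpr
    ⟨Finset.mem_powerset.mp (Finset.mem_of_mem_erase B.2), Finset.ne_of_mem_erase B.2⟩

theorem sum_powerset_mobiusInverse (φ : Finset α → M) (T : Finset α) :
    ∑ B ∈ T.powerset, mobiusInverse φ B = φ T := by
  rw [← Finset.add_sum_erase _ _ (Finset.mem_powerset_self T), mobiusInverse,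
    Finset.sum_attach, sub_add_cancel]

theorem mobiusInverse_empty (φ : Finset α → M) : mobiusInverse φ ∅ = φ ∅ := by
  simpa using sum_powerset_mobiusInverse φ ∅

end MobiusInverse

section Grounding

variable {ι : Type*} {D : ι → Type*}

section Support

variable [Fintype ι]

open scoped Classical in
noncomputable def groundedSupport (r x : ∀ i, D i) : Finset ι :=
  Finset.univ.filter fun i => x i ≠ r i

theorem groundedSupport_eq_iff {r x y : ∀ i, D i} :
    groundedSupport r x = groundedSupport r y ↔ ∀ i, (x i = r i ↔ y i = r i) := by
  simp [groundedSupport, Finset.ext_iff, not_iff_not]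

theorem groundedSupport_self (r : ∀ i, D i) : groundedSupport r r = ∅ := by
  simp [groundedSupport]

theorem prod_groundedIndicator [DecidableEq ι] (r x : ∀ i, D i) (A : Finset ι) :
    ∏ i ∈ A, groundedIndicator (r i) (x i) = if A ⊆ groundedSupport r x then 1 else 0 := by
  classical
  have h : ∀ i, groundedIndicator (r i) (x i) = if x i ≠ r i then 1 else 0 := fun i => by
    rw [groundedIndicator, ite_not]
  simp only [h, Finset.prod_boole, Finset.subset_iff, groundedSupport, Finset.mem_filter,
    Finset.mem_univ, true_and]
  congr

theorem exists_eq_add_sum_prod_groundedIndicator (r : ∀ i, D i) {E : (∀ i, D i) → ℝ}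
    (hE : E.FactorsThrough (groundedSupport r)) :
    ∃ c : Finset ι → ℝ, ∀ x, E x = E r +
      ∑ A ∈ Finset.univ.filter (fun A : Finset ι => A.Nonempty),
        c A * ∏ i ∈ A, groundedIndicator (r i) (x i) := by
  classical
  set φ := Function.extend (groundedSupport r) E 0
  have hφ : ∀ x, φ (groundedSupport r x) = E x := hE.extend_apply 0
  refine ⟨mobiusInverse φ, fun x => ?_⟩
  have hsum : ∑ A ∈ Finset.univ.filter (fun A : Finset ι => A.Nonempty),
      mobiusInverse φ A * ∏ i ∈ A, groundedIndicator (r i) (x i) =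
      ∑ A ∈ (groundedSupport r x).powerset.erase ∅, mobiusInverse φ A := by
    simp only [prod_groundedIndicator, mul_ite, mul_one, mul_zero]
    rw [← Finset.sum_filter, Finset.filter_filter]
    congr 1
    ext A
    simp [Finset.nonempty_iff_ne_empty]
  rw [hsum, Finset.sum_erase_eq_sub (Finset.empty_mem_powerset _), sum_powerset_mobiusInverse,
    mobiusInverse_empty, ← hφ x, ← hφ r, groundedSupport_self]
  abel

end Support

variable [DecidableEq ι] {F : (∀ i, D i) → ℝ} {g : ι → (∀ i, D i) → ℝ} {r : ∀ i, D i}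

theorem apply_update_eq_of_ne_ref (hg : ∀ i x (t : D i), g i (Function.update x i t) = g i x)
    (hF : ∀ i x, F x - F (Function.update x i (r i)) = groundedIndicator (r i) (x i) * g i x)
    {i : ι} {x : ∀ i, D i} {t : D i} (ht : t ≠ r i) (hx : x i ≠ r i) :
    F (Function.update x i t) = F x := by
  have h₁ := hF i (Function.update x i t)
  have h₂ := hF i x
  rw [Function.update_idem, Function.update_self, hg, groundedIndicator, if_neg ht] at h₁
  rw [groundedIndicator, if_neg hx] at h₂
  linarith

theorem factorsThrough_groundedSupport [Fintype ι]
    (hg : ∀ i x (t : D i), g i (Function.update x i t) = g i x)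
    (hF : ∀ i x, F x - F (Function.update x i (r i)) = groundedIndicator (r i) (x i) * g i x) :
    F.FactorsThrough (groundedSupport r) := by
  intro x y hxy
  rw [groundedSupport_eq_iff] at hxy
  suffices ∀ s : Finset ι, ∀ x : ∀ i, D i, (∀ i, (x i = r i ↔ y i = r i)) →
      (∀ i ∉ s, x i = y i) → F x = F y from this Finset.univ x hxy (by simp)
  intro s
  induction s using Finset.induction_on with
  | empty => exact fun x _ hxs => congrArg F (funext fun i => hxs i (Finset.notMem_empty i))
  | insert a s ha ih =>
    intro x hx hxs
    have hstep : F (Function.update x a (y a)) = F x := by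
      by_cases hya : y a = r a
      · rw [hya, ← (hx a).mpr hya, Function.update_eq_self]
      · exact apply_update_eq_of_ne_ref hg hF hya (mt (hx a).mp hya)
    rw [← hstep]
    refine ih _ (fun i => ?_) (fun i hi => ?_)
    · rcases eq_or_ne i a with rfl | hia
      · rw [Function.update_self]
      · rw [Function.update_of_ne hia, hx]
    · rcases eq_or_ne i a with rfl | hia
      · rw [Function.update_self]
      · rw [Function.update_of_ne hia, hxs i (by simp [hia, hi])]

end Grounding

theorem mixedStates_MRF_energy_decomposition_general
    {N : ℕ} (D : Fin N → Type*) (r : ∀ i, D i)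
    (p q : (∀ i, D i) → ℝ) (hp : ∀ x, 0 < p x) (hq : ∀ x, 0 < q x)
    (g : ∀ _ : Fin N, (∀ j, D j) → ℝ)
    (hg : ∀ (i : Fin N) (x : ∀ j, D j) (t : D i),
        g i (Function.update x i t) = g i x)
    (hpq : ∀ (i : Fin N) (x : ∀ j, D j),
        Real.log (p x / p (Function.update x i (r i))) =
          groundedIndicator (r i) (x i) * g i x +
          Real.log (q x / q (Function.update x i (r i)))) :
    ∃ c : Finset (Fin N) → ℝ, ∀ x : ∀ j, D j,
      Real.log (p x / p r) =
        (∑ A ∈ Finset.univ.filter (fun A : Finset (Fin N) => A.Nonempty),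
          c A * ∏ i ∈ A, groundedIndicator (r i) (x i)) +
        Real.log (q x / q r) := by
  set F : (∀ j, D j) → ℝ := fun x => Real.log (p x) - Real.log (q x)
  have log_div_sub_log_div (x y : ∀ j, D j) :
      Real.log (p x / p y) - Real.log (q x / q y) = F x - F y := by
    rw [Real.log_div (hp x).ne' (hp y).ne', Real.log_div (hq x).ne' (hq y).ne']
    ring
  have hF : ∀ i x, F x - F (Function.update x i (r i)) = groundedIndicator (r i) (x i) * g i x :=
    fun i x => by
      rw [← log_div_sub_log_div, hpq]
      ring
  obtain ⟨c, hc⟩ := exists_eq_add_sum_prod_groundedIndicator r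
    (factorsThrough_groundedSupport hg hF)
  exact ⟨c, fun x => by linarith [hc x, log_div_sub_log_div x r]⟩

/-- **Decomposition theorem for mixed-states Markov random fields (energy form).**
Let `p, q : D → ℝ` be strictly positive.  Suppose that for each site `i` there
is a function `g i : D → ℝ` not depending on the `i`-th coordinate such that
`log (p x / p (x[i ↦ r i])) = 1*_{r i}(x i) · g i x + log (q x / q (x[i ↦ r i]))`
for all `x`, and that each `D i` contains an element distinct from `r i`.
Then there exist real constants `(c A)` indexed by the nonempty subsets
`A ⊆ S` such that for all `x`:
`log (p x / p r) = Σ_{∅ ≠ A ⊆ S} c A · Π_{i ∈ A} 1*_{r i}(x i) + log (q x / q r)`. -/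
theorem mixedStates_MRF_energy_decomposition
    {N : ℕ} (hN : 0 < N) (D : Fin N → Type*) [∀ i, Nonempty (D i)]
    (r : ∀ i, D i) (hr : ∀ i, ∃ y : D i, y ≠ r i)
    (p q : (∀ i, D i) → ℝ) (hp : ∀ x, 0 < p x) (hq : ∀ x, 0 < q x)
    (g : ∀ _ : Fin N, (∀ j, D j) → ℝ)
    (hg : ∀ (i : Fin N) (x : ∀ j, D j) (t : D i),
        g i (Function.update x i t) = g i x)
    (hpq : ∀ (i : Fin N) (x : ∀ j, D j),
        Real.log (p x / p (Function.update x i (r i))) =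
          groundedIndicator (r i) (x i) * g i x +
          Real.log (q x / q (Function.update x i (r i)))) :
    ∃ c : Finset (Fin N) → ℝ, ∀ x : ∀ j, D j,
      Real.log (p x / p r) =
        (∑ A ∈ Finset.univ.filter (fun A : Finset (Fin N) => A.Nonempty),
          c A * ∏ i ∈ A, groundedIndicator (r i) (x i)) +
        Real.log (q x / q r) :=
  mixedStates_MRF_energy_decomposition_general D r p q hp hq g hg hpq
end

section
/- Let p, q : D → ℝ be strictly positive. Assume that for each i ∈ S there is a function g_i : D → ℝ depending only on the coordinates in S∖{i} such that for all x ∈ D: log( p(x) / p(g_{S∖{i}}(x)) ) = 1*_{r_i}(x_i) · g_i(x) + log( q(x) / q(g_{S∖{i}}(x)) ), and that each D_i contains an element distinct from r_i. Let (Q^m_A)_{A⊆S} and (Q^a_A)_{A⊆S} be the unique Hammersley–Clifford potential families of p and q respectively (each Q_A depending only on the coordinates in A, vanishing whenever some coordinate x_i with i ∈ A equals r_i, and summing to log(p(x)/p(r)), resp. log(q(x)/q(r))). Then for every nonempty A ⊆ S there is a real constant c_A such that Q^m_A(x) = c_A · ∏_{i∈A} 1*_{r_i}(x_i) + Q^a_A(x)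 for all x ∈ D; that is, each potential of the mixed-states field decomposes into a purely discrete part and the corresponding potential of the continuous field. -/
/-
The difference `R = Qm - Qa` is the Hammersley–Clifford potential family of
`F = log (p / p r) - log (q / q r)`, and the hypothesis says that `F` changes by
`1*(x i) · g i x` when the `i`-th coordinate is grounded. Hence `F` is unchanged when a
coordinate moves between two non-reference values, so `F = F ∘ σ`, where `σ` replaces
every non-reference coordinate by a fixed non-reference value `y i`. Since `R ∘ σ` is a
potential family of `F ∘ σ`, uniqueness of potentials gives `R = R ∘ σ`, and on the
configurations with no reference coordinate in `A` the map `x ↦ R A (σ x)` is constant.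
-/

open Finset Function

section Potentials

variable {ι : Type*} [Fintype ι] [DecidableEq ι] {D : ι → Type*}

/-- The Hammersley–Clifford potential family of `F` grounded at `r`; `A.piecewise x r` is the
grounding map `g_A`. -/
structure IsGroundedPotential (r : ∀ i, D i) (F : (∀ i, D i) → ℝ)
    (Q : Finset ι → (∀ i, D i) → ℝ) : Prop where
  apply_piecewise : ∀ A x, Q A x = Q A (A.piecewise x r)
  apply_eq_zero : ∀ A x, (∃ i ∈ A, x i = r i) → Q A x = 0
  apply_eq_sum : ∀ x, F x = ∑ A, Q A x

namespace IsGroundedPotential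

variable {r : ∀ i, D i} {F : (∀ i, D i) → ℝ} {Q : Finset ι → (∀ i, D i) → ℝ}

theorem sub {F' : (∀ i, D i) → ℝ} {Q' : Finset ι → (∀ i, D i) → ℝ}
    (hQ : IsGroundedPotential r F Q) (hQ' : IsGroundedPotential r F' Q') :
    IsGroundedPotential r (F - F') (Q - Q') where
  apply_piecewise A x := by
    simp only [Pi.sub_apply, ← hQ.apply_piecewise, ← hQ'.apply_piecewise]
  apply_eq_zero A x h := by
    simp only [Pi.sub_apply, hQ.apply_eq_zero A x h, hQ'.apply_eq_zero A x h, sub_zero]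
  apply_eq_sum x := by
    simp only [Pi.sub_apply, sum_sub_distrib, hQ.apply_eq_sum, hQ'.apply_eq_sum]

theorem apply_piecewise_eq_sum_powerset (hQ : IsGroundedPotential r F Q)
    (A : Finset ι) (x : ∀ i, D i) : F (A.piecewise x r) = ∑ B ∈ A.powerset, Q B x := by
  rw [hQ.apply_eq_sum, ← sum_subset (subset_univ A.powerset)]
  · refine sum_congr rfl fun B hB => ?_
    rw [hQ.apply_piecewise B, hQ.apply_piecewise B x,
      piecewise_piecewise_of_subset_left (mem_powerset.mp hB)]
  · intro B _ hB
    obtain ⟨i, hiB, hiA⟩ := not_subset.mp (mt mem_powerset.mpr hB)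
    exact hQ.apply_eq_zero B _ ⟨i, hiB, piecewise_eq_of_notMem _ _ _ hiA⟩

theorem eq_zero (hQ : IsGroundedPotential r 0 Q) : Q = 0 := by
  funext A x
  induction A using strongInduction with
  | _ A ih =>
    have hsum := hQ.apply_piecewise_eq_sum_powerset A x
    rw [← add_sum_erase _ _ (mem_powerset_self A), sum_eq_zero fun B hB => ih B
      (ssubset_of_subset_of_ne (mem_powerset.mp (mem_of_mem_erase hB)) (ne_of_mem_erase hB))]
      at hsum
    simpa using hsum.symm

theorem unique {Q' : Finset ι → (∀ i, D i) → ℝ} (hQ : IsGroundedPotential r F Q)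
    (hQ' : IsGroundedPotential r F Q') : Q = Q' := by
  have hdiff := hQ.sub hQ'
  rw [sub_self] at hdiff
  exact sub_eq_zero.mp hdiff.eq_zero

theorem comp_map (hQ : IsGroundedPotential r F Q) (τ : ∀ i, D i → D i)
    (hτ : ∀ i, τ i (r i) = r i) :
    IsGroundedPotential r (fun x => F fun i => τ i (x i)) (fun A x => Q A fun i => τ i (x i)) where
  apply_piecewise A x := by
    rw [hQ.apply_piecewise, hQ.apply_piecewise A (fun i => τ i _)]
    congr 1
    funext i
    by_cases hi : i ∈ A <;> simp [hi]
  apply_eq_zero A x := fun ⟨i, hiA, hxi⟩ => hQ.apply_eq_zero A _ ⟨i, hiA, by simp [hxi, hτ]⟩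
  apply_eq_sum x := hQ.apply_eq_sum _

end IsGroundedPotential

end Potentials

section Invariance

variable {ι : Type*} [DecidableEq ι] {D : ι → Type*}

theorem apply_eq_of_forall_update_eq [Fintype ι] {β : Type*} (F : (∀ i, D i) → β)
    (rel : ∀ i, D i → D i → Prop) (hF : ∀ x i t, rel i (x i) t → F (update x i t) = F x)
    {x y : ∀ i, D i} (hxy : ∀ i, rel i (x i) (y i)) : F y = F x := by
  suffices ∀ s : Finset ι, F (s.piecewise y x) = F x by simpa using this univ
  intro s
  induction s using Finset.induction_on with
  | empty => simp
  | insert j s hj ih =>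
    rw [piecewise_insert, hF _ _ _ (by rw [piecewise_eq_of_notMem _ _ _ hj]; exact hxy j), ih]

theorem apply_update_eq_of_sub_update_eq_mul_groundedIndicator (F : (∀ i, D i) → ℝ)
    (r : ∀ i, D i) (g : ι → (∀ i, D i) → ℝ) (hg : ∀ i x t, g i (update x i t) = g i x)
    (hF : ∀ i x, F x - F (update x i (r i)) = groundedIndicator (r i) (x i) * g i x)
    {x : ∀ i, D i} {i : ι} {t : D i} (hx : x i ≠ r i) (ht : t ≠ r i) :
    F (update x i t) = F x := by
  have h₁ := hF i (update x i t)
  have h₂ := hF i x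
  rw [update_idem, hg, groundedIndicator, update_self, if_neg ht] at h₁
  rw [groundedIndicator, if_neg hx] at h₂
  linarith

theorem IsGroundedPotential.exists_eq_mul_prod_groundedIndicator [Fintype ι] {r : ∀ i, D i}
    {F : (∀ i, D i) → ℝ} {Q : Finset ι → (∀ i, D i) → ℝ} (hQ : IsGroundedPotential r F Q)
    (hr : ∀ i, ∃ y : D i, y ≠ r i)
    (hF : ∀ x i t, x i ≠ r i → t ≠ r i → F (update x i t) = F x) (A : Finset ι) :
    ∃ c : ℝ, ∀ x, Q A x = c * ∏ i ∈ A, groundedIndicator (r i) (x i) := by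
  classical
  choose y hy using hr
  set τ : ∀ i, D i → D i := fun i a => if a = r i then r i else y i
  have hFτ : (fun x => F fun i => τ i (x i)) = F := by
    funext x
    refine apply_eq_of_forall_update_eq F (fun i a b => a = r i ∧ b = r i ∨ a ≠ r i ∧ b ≠ r i)
      (fun x i t hxt => ?_) (fun i => ?_)
    · rcases hxt with ⟨hx, ht⟩ | ⟨hx, ht⟩
      · rw [ht, ← hx, update_eq_self]
      · exact hF x i t hx ht
    · by_cases hxi : x i = r i <;> simp [τ, hxi, hy]
  have hQτ := (hQ.comp_map τ fun i => if_pos rfl).unique (hFτ ▸ hQ)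
  refine ⟨Q A y, fun x => ?_⟩
  by_cases hxA : ∃ i ∈ A, x i = r i
  · obtain ⟨i, hiA, hxi⟩ := hxA
    rw [hQ.apply_eq_zero A x ⟨i, hiA, hxi⟩,
      prod_eq_zero hiA (by simp [groundedIndicator, hxi]), mul_zero]
  · push Not at hxA
    rw [prod_eq_one fun i hi => by simp [groundedIndicator, hxA i hi], mul_one,
      ← congrFun (congrFun hQτ A) x, hQ.apply_piecewise, hQ.apply_piecewise A y]
    congr 1
    exact A.piecewise_congr (fun i hi => by simp [τ, hxA i hi]) fun _ _ => rfl

end Invariance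

theorem mixedStates_MRF_potential_decomposition_general
    {N : ℕ} (D : Fin N → Type*)
    (r : ∀ i, D i) (hr : ∀ i, ∃ y : D i, y ≠ r i)
    (p q : (∀ i, D i) → ℝ) (hp : ∀ x, 0 < p x) (hq : ∀ x, 0 < q x)
    (g : ∀ _ : Fin N, (∀ j, D j) → ℝ)
    (hg : ∀ (i : Fin N) (x : ∀ j, D j) (t : D i),
        g i (Function.update x i t) = g i x)
    (hpq : ∀ (i : Fin N) (x : ∀ j, D j),
        Real.log (p x / p (Function.update x i (r i))) =
          groundedIndicator (r i) (x i) * g i x +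
          Real.log (q x / q (Function.update x i (r i))))
    (Qm Qa : Finset (Fin N) → ((∀ j, D j) → ℝ))
    (hQm1 : ∀ (A : Finset (Fin N)) (x : ∀ j, D j),
        Qm A x = Qm A (fun i => if i ∈ A then x i else r i))
    (hQm2 : ∀ (A : Finset (Fin N)) (x : ∀ j, D j),
        (∃ i ∈ A, x i = r i) → Qm A x = 0)
    (hQm3 : ∀ x : ∀ j, D j,
        Real.log (p x / p r) = ∑ A : Finset (Fin N), Qm A x)
    (hQa1 : ∀ (A : Finset (Fin N)) (x : ∀ j, D j),
        Qa A x = Qa A (fun i => if i ∈ A then x i else r i))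
    (hQa2 : ∀ (A : Finset (Fin N)) (x : ∀ j, D j),
        (∃ i ∈ A, x i = r i) → Qa A x = 0)
    (hQa3 : ∀ x : ∀ j, D j,
        Real.log (q x / q r) = ∑ A : Finset (Fin N), Qa A x) :
    ∀ A : Finset (Fin N), A.Nonempty →
      ∃ c : ℝ, ∀ x : ∀ j, D j,
        Qm A x = c * ∏ i ∈ A, groundedIndicator (r i) (x i) + Qa A x := by
  intro A _
  set F : (∀ j, D j) → ℝ := fun x => Real.log (p x / p r) - Real.log (q x / q r)
  have hR : IsGroundedPotential r F (Qm - Qa) :=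
    (IsGroundedPotential.mk hQm1 hQm2 hQm3).sub ⟨hQa1, hQa2, hQa3⟩
  have hstep : ∀ i x, F x - F (update x i (r i)) = groundedIndicator (r i) (x i) * g i x := by
    intro i x
    have h := hpq i x
    simp only [F, Real.log_div (hp _).ne' (hp _).ne', Real.log_div (hq _).ne' (hq _).ne'] at h ⊢
    linarith
  obtain ⟨c, hc⟩ := hR.exists_eq_mul_prod_groundedIndicator hr
    (fun x i t => apply_update_eq_of_sub_update_eq_mul_groundedIndicator F r g hg hstep) A
  exact ⟨c, fun x => by rw [← hc x, Pi.sub_apply, Pi.sub_apply, sub_add_cancel]⟩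

/-- **Decomposition of mixed-states potentials.**
Let `p, q : D → ℝ` be strictly positive, with for each site `i` a function
`g i` not depending on the `i`-th coordinate such that
`log (p x / p (x[i ↦ r i])) = 1*_{r i}(x i) · g i x + log (q x / q (x[i ↦ r i]))`,
and each `D i` containing an element distinct from `r i`.
If `(Qm A)` and `(Qa A)` are the Hammersley–Clifford potential families of `p`
and `q` respectively, then for every nonempty `A ⊆ S` there is a constant
`c_A` such that `Qm A x = c_A · Π_{i ∈ A} 1*_{r i}(x i) + Qa A x` for all `x`:
each mixed-states potential decomposes into a purely discrete part and the
corresponding potential of the continuous field. -/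
theorem mixedStates_MRF_potential_decomposition
    {N : ℕ} (hN : 0 < N) (D : Fin N → Type*) [∀ i, Nonempty (D i)]
    (r : ∀ i, D i) (hr : ∀ i, ∃ y : D i, y ≠ r i)
    (p q : (∀ i, D i) → ℝ) (hp : ∀ x, 0 < p x) (hq : ∀ x, 0 < q x)
    (g : ∀ _ : Fin N, (∀ j, D j) → ℝ)
    (hg : ∀ (i : Fin N) (x : ∀ j, D j) (t : D i),
        g i (Function.update x i t) = g i x)
    (hpq : ∀ (i : Fin N) (x : ∀ j, D j),
        Real.log (p x / p (Function.update x i (r i))) =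
          groundedIndicator (r i) (x i) * g i x +
          Real.log (q x / q (Function.update x i (r i))))
    (Qm Qa : Finset (Fin N) → ((∀ j, D j) → ℝ))
    (hQm1 : ∀ (A : Finset (Fin N)) (x : ∀ j, D j),
        Qm A x = Qm A (fun i => if i ∈ A then x i else r i))
    (hQm2 : ∀ (A : Finset (Fin N)) (x : ∀ j, D j),
        (∃ i ∈ A, x i = r i) → Qm A x = 0)
    (hQm3 : ∀ x : ∀ j, D j,
        Real.log (p x / p r) = ∑ A : Finset (Fin N), Qm A x)
    (hQa1 : ∀ (A : Finset (Fin N)) (x : ∀ j, D j),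
        Qa A x = Qa A (fun i => if i ∈ A then x i else r i))
    (hQa2 : ∀ (A : Finset (Fin N)) (x : ∀ j, D j),
        (∃ i ∈ A, x i = r i) → Qa A x = 0)
    (hQa3 : ∀ x : ∀ j, D j,
        Real.log (q x / q r) = ∑ A : Finset (Fin N), Qa A x) :
    ∀ A : Finset (Fin N), A.Nonempty →
      ∃ c : ℝ, ∀ x : ∀ j, D j,
        Qm A x = c * ∏ i ∈ A, groundedIndicator (r i) (x i) + Qa A x :=
  mixedStates_MRF_potential_decomposition_general D r hr p q hp hq g hg hpq Qm Qa hQm1 hQm2 hQm3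
    hQa1 hQa2 hQa3
end

section
/- Let p, q : D → ℝ be strictly positive. Assume that for each i ∈ S there is a function g_i : D → ℝ depending only on the coordinates in S∖{i} such that for all x ∈ D: log( p(x) / p(g_{S∖{i}}(x)) ) = 1*_{r_i}(x_i) · g_i(x) + log( q(x) / q(g_{S∖{i}}(x)) ), and that each D_i contains an element distinct from r_i. Let (Q^m_A) and (Q^a_A) be the unique Hammersley–Clifford potential families of p and q respectively. Then for every i ∈ S, the first-order (singleton) potentials satisfy Q^m_{{i}}(x) = g_i(r) · 1*_{r_i}(x_i) + Q^a_{{i}}(x) for all x ∈ D, where g_i(r) is the value of g_i at the fully grounded configuration r. -/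
section PotentialFamily

variable {ι : Type*} [Fintype ι] [DecidableEq ι] {D : ι → Type*}

structure IsPotentialFamily (r : ∀ i, D i) (f : (∀ i, D i) → ℝ)
    (Q : Finset ι → (∀ i, D i) → ℝ) : Prop where
  eq_grounded : ∀ A x, Q A x = Q A (fun i => if i ∈ A then x i else r i)
  eq_zero_of_exists_eq : ∀ A x, (∃ i ∈ A, x i = r i) → Q A x = 0
  log_div_eq_sum : ∀ x, Real.log (f x / f r) = ∑ A, Q A x

namespace IsPotentialFamily

variable {r : ∀ i, D i} {f : (∀ i, D i) → ℝ} {Q : Finset ι → (∀ i, D i) → ℝ}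

theorem dependsOn (hQ : IsPotentialFamily r f Q) (A : Finset ι) :
    DependsOn (Q A) (A : Set ι) := by
  intro x y hxy
  rw [hQ.eq_grounded A x, hQ.eq_grounded A y]
  congr 1
  funext i
  split_ifs with hi
  · exact hxy i hi
  · rfl

theorem empty_eq_zero (hQ : IsPotentialFamily r f Q) (x : ∀ i, D i) : Q ∅ x = 0 := by
  have hsum := hQ.log_div_eq_sum r
  rw [Real.log_div_self, Fintype.sum_eq_single ∅ fun A hA => by
    obtain ⟨j, hj⟩ := Finset.nonempty_iff_ne_empty.2 hA
    exact hQ.eq_zero_of_exists_eq A r ⟨j, hj, rfl⟩] at hsum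
  rw [hQ.dependsOn ∅ (x := x) (y := r) (by simp), hsum]

theorem eq_zero_at_update_of_ne_singleton (hQ : IsPotentialFamily r f Q) {i : ι} {A : Finset ι}
    (hA : A ≠ {i}) (t : D i) : Q A (Function.update r i t) = 0 := by
  by_cases hAi : ∃ j ∈ A, j ≠ i
  · obtain ⟨j, hj, hji⟩ := hAi
    exact hQ.eq_zero_of_exists_eq A _ ⟨j, hj, Function.update_of_ne hji t r⟩
  · push Not at hAi
    have hsub : A ⊆ {i} := fun j hj => Finset.mem_singleton.2 (hAi j hj)
    obtain rfl : A = ∅ := (Finset.subset_singleton_iff.1 hsub).resolve_right hA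
    exact hQ.empty_eq_zero _

theorem singleton_eq_log_div (hQ : IsPotentialFamily r f Q) (i : ι) (x : ∀ i, D i) :
    Q {i} x = Real.log (f (Function.update r i (x i)) / f r) := by
  have hx : Q {i} x = Q {i} (Function.update r i (x i)) :=
    hQ.dependsOn {i} fun j hj => by
      rw [Finset.coe_singleton, Set.mem_singleton_iff] at hj
      subst hj
      rw [Function.update_self]
  rw [hx, hQ.log_div_eq_sum, Fintype.sum_eq_single {i} fun A hA =>
    hQ.eq_zero_at_update_of_ne_singleton hA (x i)]

end IsPotentialFamily

end PotentialFamily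

theorem mixedStates_MRF_firstOrder_potentials_general
    {N : ℕ} (D : Fin N → Type*)
    (r : ∀ i, D i)
    (p q : (∀ i, D i) → ℝ)
    (g : ∀ _ : Fin N, (∀ j, D j) → ℝ)
    (hg : ∀ (i : Fin N) (x : ∀ j, D j) (t : D i),
        g i (Function.update x i t) = g i x)
    (hpq : ∀ (i : Fin N) (x : ∀ j, D j),
        Real.log (p x / p (Function.update x i (r i))) =
          groundedIndicator (r i) (x i) * g i x +
          Real.log (q x / q (Function.update x i (r i))))
    (Qm Qa : Finset (Fin N) → ((∀ j, D j) → ℝ))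
    (hQm1 : ∀ (A : Finset (Fin N)) (x : ∀ j, D j),
        Qm A x = Qm A (fun i => if i ∈ A then x i else r i))
    (hQm2 : ∀ (A : Finset (Fin N)) (x : ∀ j, D j),
        (∃ i ∈ A, x i = r i) → Qm A x = 0)
    (hQm3 : ∀ x : ∀ j, D j,
        Real.log (p x / p r) = ∑ A : Finset (Fin N), Qm A x)
    (hQa1 : ∀ (A : Finset (Fin N)) (x : ∀ j, D j),
        Qa A x = Qa A (fun i => if i ∈ A then x i else r i))
    (hQa2 : ∀ (A : Finset (Fin N)) (x : ∀ j, D j),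
        (∃ i ∈ A, x i = r i) → Qa A x = 0)
    (hQa3 : ∀ x : ∀ j, D j,
        Real.log (q x / q r) = ∑ A : Finset (Fin N), Qa A x) :
    ∀ (i : Fin N) (x : ∀ j, D j),
      Qm {i} x = g i r * groundedIndicator (r i) (x i) + Qa {i} x := by
  intro i x
  have hm : IsPotentialFamily r p Qm := ⟨hQm1, hQm2, hQm3⟩
  have ha : IsPotentialFamily r q Qa := ⟨hQa1, hQa2, hQa3⟩
  have hpq_single := hpq i (Function.update r i (x i))
  rw [Function.update_idem, Function.update_eq_self, Function.update_self, hg i r (x i)]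
    at hpq_single
  rw [hm.singleton_eq_log_div, ha.singleton_eq_log_div, hpq_single, mul_comm]

/-- **First-order (singleton) potentials of a mixed-states field.**
Under the hypotheses of the mixed-states decomposition theorem, the singleton
potentials satisfy `Qm {i} x = g i r · 1*_{r i}(x i) + Qa {i} x` for all `x`,
where `g i r` is the value of `g i` at the fully grounded configuration `r`. -/
theorem mixedStates_MRF_firstOrder_potentials
    {N : ℕ} (hN : 0 < N) (D : Fin N → Type*) [∀ i, Nonempty (D i)]
    (r : ∀ i, D i) (hr : ∀ i, ∃ y : D i, y ≠ r i)
    (p q : (∀ i, D i) → ℝ) (hp : ∀ x, 0 < p x) (hq : ∀ x, 0 < q x)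
    (g : ∀ _ : Fin N, (∀ j, D j) → ℝ)
    (hg : ∀ (i : Fin N) (x : ∀ j, D j) (t : D i),
        g i (Function.update x i t) = g i x)
    (hpq : ∀ (i : Fin N) (x : ∀ j, D j),
        Real.log (p x / p (Function.update x i (r i))) =
          groundedIndicator (r i) (x i) * g i x +
          Real.log (q x / q (Function.update x i (r i))))
    (Qm Qa : Finset (Fin N) → ((∀ j, D j) → ℝ))
    (hQm1 : ∀ (A : Finset (Fin N)) (x : ∀ j, D j),
        Qm A x = Qm A (fun i => if i ∈ A then x i else r i))
    (hQm2 : ∀ (A : Finset (Fin N)) (x : ∀ j, D j),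
        (∃ i ∈ A, x i = r i) → Qm A x = 0)
    (hQm3 : ∀ x : ∀ j, D j,
        Real.log (p x / p r) = ∑ A : Finset (Fin N), Qm A x)
    (hQa1 : ∀ (A : Finset (Fin N)) (x : ∀ j, D j),
        Qa A x = Qa A (fun i => if i ∈ A then x i else r i))
    (hQa2 : ∀ (A : Finset (Fin N)) (x : ∀ j, D j),
        (∃ i ∈ A, x i = r i) → Qa A x = 0)
    (hQa3 : ∀ x : ∀ j, D j,
        Real.log (q x / q r) = ∑ A : Finset (Fin N), Qa A x) :
    ∀ (i : Fin N) (x : ∀ j, D j),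
      Qm {i} x = g i r * groundedIndicator (r i) (x i) + Qa {i} x :=
  mixedStates_MRF_firstOrder_potentials_general D r p q g hg hpq Qm Qa hQm1 hQm2 hQm3 hQa1 hQa2 hQa3
end
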